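/- arXiv:2203.01648 — 2 statements merged into one kernel-verified Lean document; each statement's English description precedes it below -/
import Mathlib

section
/- Let δ > 0 and let u, s be as follows: u(t) = −log(1/δ + 1 − e^{−t}) and s(t) = ((1 + 1/δ)t + (1/δ)(1 + 1/δ)) / (1/δ + 1 − e^{−t}) − 1 on (0, +∞). Then u''(t)·s(t) − s''(t) > 0 for all t > 0, and moreover (s(t) + s'(t)² / (u''(t)s(t) − s''(t))) · e^{u(t) − t} = 1 for all t > 0. -/
/-!
Write `a = 1/δ`, `E = e^{-t}`, `G = a + 1 - E` (so `G' = E`) and `M = a + 1 - (t + a + 1) E`.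
Then `u'' = (1 + a) E / G²`, `s' = (1 + a) M / G²` and `u'' s - s'' = (1 + a) E M / G³`, which is
positive because `G > 0` and `(a + 1) e^t > (a + 1)(1 + t) ≥ t + a + 1`. Since `e^{u - t} = E / G`,
the second claim becomes a rational identity in `t`, `E`, `G`, whose numerator collapses to
`(a + 1 - E)² = G²`.
-/

open Real Filter Topology

namespace DeltaModel

noncomputable def u (a t : ℝ) : ℝ := -log (a + 1 - exp (-t))

noncomputable def s (a t : ℝ) : ℝ := ((1 + a) * t + a * (1 + a)) / (a + 1 - exp (-t)) - 1

variable {a t : ℝ}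

theorem hasDerivAt_denom (a t : ℝ) : HasDerivAt (fun x => a + 1 - exp (-x)) (exp (-t)) t := by
  simpa using (hasDerivAt_neg t).exp.const_sub (a + 1)

theorem eventually_denom_ne_zero (h : a + 1 - exp (-t) ≠ 0) :
    ∀ᶠ x in 𝓝 t, a + 1 - exp (-x) ≠ 0 :=
  (hasDerivAt_denom a t).continuousAt.eventually_ne h

theorem hasDerivAt_u (h : a + 1 - exp (-t) ≠ 0) :
    HasDerivAt (u a) (-(exp (-t) / (a + 1 - exp (-t)))) t :=
  ((hasDerivAt_denom a t).log h).neg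

theorem hasDerivAt_s (h : a + 1 - exp (-t) ≠ 0) :
    HasDerivAt (s a) ((1 + a) * (a + 1 - (t + a + 1) * exp (-t)) / (a + 1 - exp (-t)) ^ 2) t := by
  have hN : HasDerivAt (fun x => (1 + a) * x + a * (1 + a)) (1 + a) t := by
    simpa using ((hasDerivAt_id t).const_mul (1 + a)).add_const (a * (1 + a))
  exact ((hN.div (hasDerivAt_denom a t) h).sub_const 1).congr_deriv (by field_simp; ring)

theorem deriv_deriv_u (h : a + 1 - exp (-t) ≠ 0) :
    deriv (deriv (u a)) t = (a + 1) * exp (-t) / (a + 1 - exp (-t)) ^ 2 := by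
  have hu : deriv (u a) =ᶠ[𝓝 t] fun x => -(exp (-x) / (a + 1 - exp (-x))) :=
    (eventually_denom_ne_zero h).mono fun x hx => (hasDerivAt_u hx).deriv
  have hu' : HasDerivAt (fun x => -(exp (-x) / (a + 1 - exp (-x))))
      ((a + 1) * exp (-t) / (a + 1 - exp (-t)) ^ 2) t :=
    (((hasDerivAt_neg t).exp.div (hasDerivAt_denom a t) h).neg).congr_deriv (by field_simp; ring)
  rw [hu.deriv_eq, hu'.deriv]

theorem deriv_deriv_s (h : a + 1 - exp (-t) ≠ 0) :
    deriv (deriv (s a)) t = (1 + a) * exp (-t) *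
      ((t + a) * (a + 1 - exp (-t)) - 2 * (a + 1 - (t + a + 1) * exp (-t))) /
        (a + 1 - exp (-t)) ^ 3 := by
  have hs : deriv (s a) =ᶠ[𝓝 t]
      fun x => (1 + a) * (a + 1 - (x + a + 1) * exp (-x)) / (a + 1 - exp (-x)) ^ 2 :=
    (eventually_denom_ne_zero h).mono fun x hx => (hasDerivAt_s hx).deriv
  have hM : HasDerivAt (fun x => (1 + a) * (a + 1 - (x + a + 1) * exp (-x)))
      ((1 + a) * (-(1 * exp (-t) + (t + a + 1) * -exp (-t)))) t := by
    have := (((hasDerivAt_id t).add_const (a + 1)).mul (hasDerivAt_neg t).exp).const_sub (a + 1)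
    simpa [add_assoc] using this.const_mul (1 + a)
  have hs' : HasDerivAt
      (fun x => (1 + a) * (a + 1 - (x + a + 1) * exp (-x)) / (a + 1 - exp (-x)) ^ 2)
      ((1 + a) * exp (-t) *
        ((t + a) * (a + 1 - exp (-t)) - 2 * (a + 1 - (t + a + 1) * exp (-t))) /
          (a + 1 - exp (-t)) ^ 3) t :=
    (hM.div ((hasDerivAt_denom a t).fun_pow 2) (pow_ne_zero 2 h)).congr_deriv (by field_simp; ring)
  rw [hs.deriv_eq, hs'.deriv]

theorem denom_pos (ha : 0 ≤ a) (ht : 0 < t) : 0 < a + 1 - exp (-t) := by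
  have : exp (-t) < 1 := exp_lt_one_iff.mpr (neg_neg_of_pos ht)
  linarith

theorem add_one_sub_mul_exp_neg_pos (ha : 0 ≤ a) (ht : 0 < t) :
    0 < a + 1 - (t + a + 1) * exp (-t) := by
  have hexp : (a + 1) * (t + 1) < (a + 1) * exp t :=
    mul_lt_mul_of_pos_left (add_one_lt_exp ht.ne') (by linarith)
  rw [sub_pos, exp_neg, ← div_eq_mul_inv, div_lt_iff₀ (exp_pos t)]
  nlinarith

theorem deriv_deriv_u_mul_s_sub_deriv_deriv_s (h : a + 1 - exp (-t) ≠ 0) :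
    deriv (deriv (u a)) t * s a t - deriv (deriv (s a)) t =
      (1 + a) * exp (-t) * (a + 1 - (t + a + 1) * exp (-t)) / (a + 1 - exp (-t)) ^ 3 := by
  rw [deriv_deriv_u h, deriv_deriv_s h, s]
  field_simp
  ring

theorem exp_u_sub (ha : 0 ≤ a) (ht : 0 < t) :
    exp (u a t - t) = exp (-t) / (a + 1 - exp (-t)) := by
  rw [u, sub_eq_add_neg, exp_add, exp_neg (log _), exp_log (denom_pos ha ht)]
  ring

theorem deriv_deriv_u_mul_s_sub_deriv_deriv_s_pos (ha : 0 ≤ a) (ht : 0 < t) :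
    0 < deriv (deriv (u a)) t * s a t - deriv (deriv (s a)) t := by
  rw [deriv_deriv_u_mul_s_sub_deriv_deriv_s (denom_pos ha ht).ne']
  have := add_one_sub_mul_exp_neg_pos ha ht
  have := denom_pos ha ht
  positivity

theorem s_add_sq_deriv_div_mul_exp_u_sub (ha : 0 ≤ a) (ht : 0 < t) :
    (s a t + deriv (s a) t ^ 2 / (deriv (deriv (u a)) t * s a t - deriv (deriv (s a)) t)) *
      exp (u a t - t) = 1 := by
  have hG := (denom_pos ha ht).ne'
  have hM := (add_one_sub_mul_exp_neg_pos ha ht).ne'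
  rw [deriv_deriv_u_mul_s_sub_deriv_deriv_s hG, (hasDerivAt_s hG).deriv, exp_u_sub ha ht, s]
  field_simp
  ring

end DeltaModel

/-- For `δ > 0`, with `u t = -log (1/δ + 1 - e^{-t})` and
`s t = ((1 + 1/δ) t + (1/δ)(1 + 1/δ)) / (1/δ + 1 - e^{-t}) - 1` on `(0,∞)`,
one has `u'' t * s t - s'' t > 0` for all `t > 0`, and moreover
`(s t + (s' t)^2 / (u'' t * s t - s'' t)) * e^{u t - t} = 1` for all `t > 0`. -/
theorem stmt_4 (δ : ℝ) (hδ : 0 < δ) (u s : ℝ → ℝ)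
    (hu : ∀ t, u t = -Real.log (1/δ + 1 - Real.exp (-t)))
    (hs : ∀ t, s t = ((1 + 1/δ) * t + (1/δ) * (1 + 1/δ)) / (1/δ + 1 - Real.exp (-t)) - 1) :
    (∀ t > (0:ℝ), 0 < deriv (deriv u) t * s t - deriv (deriv s) t) ∧
      ∀ t > (0:ℝ),
        (s t + (deriv s t)^2 / (deriv (deriv u) t * s t - deriv (deriv s) t)) *
          Real.exp (u t - t) = 1 := by
  obtain rfl : u = DeltaModel.u (1/δ) := funext hu
  obtain rfl : s = DeltaModel.s (1/δ) := funext hs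
  have ha : 0 ≤ 1/δ := by positivity
  exact ⟨fun t => DeltaModel.deriv_deriv_u_mul_s_sub_deriv_deriv_s_pos ha,
    fun t => DeltaModel.s_add_sq_deriv_div_mul_exp_u_sub ha⟩
end

section
/- Let δ > 0 and s(t) = ((1 + 1/δ)t + (1/δ)(1 + 1/δ)) / (1/δ + 1 − e^{−t}) − 1 on (0, +∞). Then s(t) ≥ 1/δ and s'(t) > 0 for all t > 0. -/
/-!
Write `a = 1/δ` and `u = e^{-t} ∈ (0, 1)`, so that `s t + 1 = (1 + a)(t + a) / (a + 1 - u)`.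
The bound `s t ≥ a` then reduces to `u ≥ 1 - t`, and the numerator of `s' t` factors as
`(1 + a) ((1 - u (1 + t)) + a (1 - u))`, positive because `e^t > 1 + t`.
-/

open Real

section

variable {a t : ℝ}

lemma exp_neg_mul_one_add_lt_one (ht : t ≠ 0) : exp (-t) * (1 + t) < 1 := by
  rw [exp_neg, inv_mul_eq_div, div_lt_one (exp_pos t), add_comm]
  exact add_one_lt_exp ht

lemma exp_neg_lt_one (ht : 0 < t) : exp (-t) < 1 :=
  exp_lt_one_iff.mpr (neg_neg_iff_pos.mpr ht)

lemma exp_neg_lt_add_one (ha : 0 ≤ a) (ht : 0 < t) : exp (-t) < a + 1 := by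
  linarith [exp_neg_lt_one ht]

lemma le_mul_div_add_one_sub_exp_neg_sub_one (ha : 0 ≤ a) (ht : 0 < t) :
    a ≤ (1 + a) * (t + a) / (a + 1 - exp (-t)) - 1 := by
  have hden : 0 < a + 1 - exp (-t) := sub_pos.mpr (exp_neg_lt_add_one ha ht)
  rw [le_sub_iff_add_le, le_div_iff₀ hden]
  nlinarith [one_sub_le_exp_neg t]

lemma hasDerivAt_mul_div_add_one_sub_exp_neg (ha : 0 ≤ a) (ht : 0 < t) :
    HasDerivAt (fun t ↦ (1 + a) * (t + a) / (a + 1 - exp (-t)))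
      ((1 + a) * ((1 - exp (-t) * (1 + t)) + a * (1 - exp (-t))) / (a + 1 - exp (-t)) ^ 2) t := by
  have hnum : HasDerivAt (fun t ↦ (1 + a) * (t + a)) ((1 + a) * 1) t :=
    ((hasDerivAt_id t).add_const a).const_mul (1 + a)
  have hden : HasDerivAt (fun t ↦ a + 1 - exp (-t)) (-(exp (-t) * -1)) t :=
    ((hasDerivAt_neg t).exp).const_sub (a + 1)
  exact (hnum.div hden (sub_pos.mpr (exp_neg_lt_add_one ha ht)).ne').congr_deriv (by ring)

end

/-- For `δ > 0` and `s t = ((1 + 1/δ) t + (1/δ)(1 + 1/δ)) / (1/δ + 1 - e^{-t}) - 1`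
on `(0,∞)`, one has `s t ≥ 1/δ` and `s' t > 0` for all `t > 0`. -/
theorem stmt_5 (δ : ℝ) (hδ : 0 < δ) (s : ℝ → ℝ)
    (hs : ∀ t, s t = ((1 + 1/δ) * t + (1/δ) * (1 + 1/δ)) / (1/δ + 1 - Real.exp (-t)) - 1) :
    ∀ t > (0:ℝ), 1/δ ≤ s t ∧ 0 < deriv s t := by
  intro t ht
  have ha : 0 ≤ 1/δ := by positivity
  have hs' : s = fun t ↦ (1 + 1/δ) * (t + 1/δ) / (1/δ + 1 - exp (-t)) - 1 := by
    funext t; rw [hs]; ring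
  subst hs'
  refine ⟨le_mul_div_add_one_sub_exp_neg_sub_one ha ht, ?_⟩
  rw [((hasDerivAt_mul_div_add_one_sub_exp_neg ha ht).sub_const 1).deriv]
  have hnum : 0 < (1 - exp (-t) * (1 + t)) + 1/δ * (1 - exp (-t)) :=
    add_pos_of_pos_of_nonneg (sub_pos.mpr (exp_neg_mul_one_add_lt_one ht.ne'))
      (mul_nonneg ha (sub_pos.mpr (exp_neg_lt_one ht)).le)
  have hden : 0 < 1/δ + 1 - exp (-t) := sub_pos.mpr (exp_neg_lt_add_one ha ht)
  positivity
end
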